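/- arXiv:1202.3064 — 2 statements merged into one kernel-verified Lean document; each statement's English description precedes it below -/
import Mathlib

section
/- Let n ≥ 4 and let 1 ≥ λ₂ ≥ ... ≥ λₙ ≥ −1 be real numbers with 1 + λ₂ + ... + λₙ ≥ 0. Set S = 1/n + Σ_{j=2}^{n−2} λ_j/((n−j+2)(n−j+1)) (so that the coefficient of λ₂ is 1/(n(n−1)), of λ₃ is 1/((n−1)(n−2)), ..., of λ_{n−2} is 1/12). If both S − 2λ_{n−1}/3 + λₙ/3 ≥ 0 and S + 2λₙ/3 ≥ 0 hold, then there exists an n×n doubly stochastic matrix whose eigenvalues, counted with algebraic multiplicity, are 1, λ₂, ..., λₙ. -/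
open Matrix Polynomial

/-- A real square matrix is doubly stochastic if its entries are nonnegative and all of its
row sums and column sums are equal to `1`. -/
def DoublyStochastic {n : ℕ} (D : Matrix (Fin n) (Fin n) ℝ) : Prop :=
  (∀ i j, 0 ≤ D i j) ∧ (∀ i, ∑ j, D i j = 1) ∧ (∀ j, ∑ i, D i j = 1)

/-- The quantity `S = 1/n + ∑_{j=2}^{n-2} λⱼ/((n-j+2)(n-j+1))`. -/
noncomputable def Squant (n : ℕ) (L : ℕ → ℝ) : ℝ :=
  1 / (n : ℝ) + ∑ j ∈ Finset.Icc 2 (n - 2), L j / (((n - j + 2) * (n - j + 1) : ℕ) : ℝ)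

open Finset

/-!
The matrix is `D = P diag(μₐ / ‖vₐ‖²) Pᵀ`, where `μ = (1, λ₂, …, λₙ)` and the columns `vₐ` of `P`
are the mutually orthogonal vectors `v₀ = (1, …, 1)` and `vₐ = (1, …, 1, -(n - a), 0, …, 0)`
(`n - a` ones) for `1 ≤ a < n`. Then `D` is symmetric with `D P = P diag μ`, so it has the
characteristic polynomial of `diag μ`, and `D v₀ = v₀` says its rows sum to `1`.

The entries are explicit. With `T_j = 1/n + ∑_{j<k<n} λ_{n-k+1} / (k (k+1))`, the entries of
column `j` above the diagonal equal `T_j - λ_{n-j+1}/(j+1)` and the diagonal entry is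
`T_j + j λ_{n-j+1}/(j+1)`. Because the `λ` decrease, the former decrease and the latter increase
with `j`; so everything is nonnegative once `(1 - λ₂)/n ≥ 0` (at `j = n - 1`) and
`T_0 = (S + 2λₙ/3) + (λₙ₋₁ - λₙ)/6 ≥ 0` (at `j = 0`).
-/

theorem Finset.sum_range_eq_add_of_eq_zero {M : Type*} [AddCommMonoid M] {f : ℕ → M} {m n : ℕ}
    (hmn : m < n) (hf : ∀ x, m < x → x < n → f x = 0) :
    ∑ x ∈ range n, f x = ∑ x ∈ range m, f x + f m := by
  rw [← sum_range_succ]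
  refine (sum_subset (range_subset_range.2 hmn) fun x hx hx' => ?_).symm
  simp only [mem_range, not_lt] at hx hx'
  exact hf x (by omega) hx

namespace Soules

noncomputable def column (n a b : ℕ) : ℝ :=
  if a = 0 then 1 else if b + a < n then 1 else if b + a = n then -((n - a : ℕ) : ℝ) else 0

noncomputable def normSq (n a : ℕ) : ℝ :=
  if a = 0 then n else ((n - a : ℕ) : ℝ) * ((n - a : ℕ) + 1)

noncomputable def basisMatrix (n : ℕ) : Matrix (Fin n) (Fin n) ℝ :=
  of fun b a => column n a b

/-- The eigenvalue attached to `column n a`. -/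
noncomputable def eigen (L : ℕ → ℝ) (a : ℕ) : ℝ :=
  if a = 0 then 1 else L (a + 1)

noncomputable def weight (n : ℕ) (L : ℕ → ℝ) (a : ℕ) : ℝ :=
  eigen L a / normSq n a

noncomputable def matrix (n : ℕ) (L : ℕ → ℝ) : Matrix (Fin n) (Fin n) ℝ :=
  basisMatrix n * diagonal (fun a : Fin n => weight n L a) * (basisMatrix n)ᵀ

noncomputable def tail (n : ℕ) (L : ℕ → ℝ) (j : ℕ) : ℝ :=
  ∑ a ∈ range (n - j), weight n L a

variable {n : ℕ}

lemma column_of_lt {a b : ℕ} (h : b + a < n) : column n a b = 1 := by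
  unfold column; split_ifs <;> rfl

lemma column_zero (b : ℕ) : column n 0 b = 1 := if_pos rfl

lemma column_of_eq {a b : ℕ} (ha : a ≠ 0) (h : b + a = n) : column n a b = -((n - a : ℕ) : ℝ) := by
  rw [column, if_neg ha, if_neg h.not_lt, if_pos h]

lemma column_of_gt {a b : ℕ} (ha : a ≠ 0) (h : n < b + a) : column n a b = 0 := by
  rw [column, if_neg ha, if_neg (by omega), if_neg (by omega)]

lemma sum_mul_column_over_rows (f : ℕ → ℝ) {a : ℕ} (ha : a ≠ 0) (han : a < n) :
    ∑ b ∈ range n, f b * column n a b = ∑ b ∈ range (n - a), f b - (n - a : ℕ) * f (n - a) := by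
  rw [sum_range_eq_add_of_eq_zero (m := n - a) (by omega)
      fun b hb _ => by rw [column_of_gt ha (by omega), mul_zero],
    column_of_eq ha (by omega),
    sum_congr rfl fun b hb => by rw [column_of_lt (by simp at hb; omega), mul_one]]
  ring

lemma sum_mul_column_over_columns (f : ℕ → ℝ) {b : ℕ} (hb : b ≠ 0) (hbn : b < n) :
    ∑ a ∈ range n, f a * column n a b = ∑ a ∈ range (n - b), f a - b * f (n - b) := by
  rw [sum_range_eq_add_of_eq_zero (m := n - b) (by omega)
      fun a ha _ => by rw [column_of_gt (by omega) (by omega), mul_zero],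
    column_of_eq (by omega) (by omega),
    sum_congr rfl fun a ha => by rw [column_of_lt (by simp at ha; omega), mul_one],
    Nat.sub_sub_self hbn.le]
  ring

lemma sum_column_mul_column {k l : ℕ} (hkl : k ≤ l) (hl : l < n) :
    ∑ b ∈ range n, column n k b * column n l b = if k = l then normSq n k else 0 := by
  rcases Nat.eq_zero_or_pos l with rfl | hl0
  · obtain rfl : k = 0 := by omega
    simp [column_zero, normSq]
  rw [sum_mul_column_over_rows _ hl0.ne' hl,
    sum_congr rfl fun b hb => column_of_lt (by simp at hb; omega)]
  rcases hkl.lt_or_eq with hkl | rfl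
  · rw [column_of_lt (by omega), if_neg hkl.ne]
    simp
  · rw [column_of_eq hl0.ne' (by omega), if_pos rfl, normSq, if_neg hl0.ne']
    simp only [sum_const, card_range, nsmul_eq_mul, mul_one, mul_neg, sub_neg_eq_add]
    ring

lemma normSq_pos {a : ℕ} (ha : a < n) : 0 < normSq n a := by
  unfold normSq
  split_ifs
  · exact_mod_cast (by omega : 0 < n)
  · have : (0 : ℝ) < (n - a : ℕ) := by exact_mod_cast (by omega : 0 < n - a)
    positivity

lemma transpose_basisMatrix_mul_basisMatrix :
    (basisMatrix n)ᵀ * basisMatrix n = diagonal fun a : Fin n => normSq n a := by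
  ext k l
  simp only [mul_apply, transpose_apply, basisMatrix, of_apply, diagonal_apply, Fin.ext_iff]
  rw [Fin.sum_univ_eq_sum_range (fun b => column n k b * column n l b)]
  rcases le_total (k : ℕ) l with h | h
  · exact sum_column_mul_column h l.isLt
  · simp_rw [mul_comm (column n k _)]
    rw [sum_column_mul_column h k.isLt]
    rcases eq_or_ne (k : ℕ) l with e | e
    · simp [e]
    · simp [e, e.symm]

variable (L : ℕ → ℝ)

lemma diagonal_weight_mul_diagonal_normSq :
    (diagonal fun a : Fin n => weight n L a) * (diagonal fun a : Fin n => normSq n a) =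
      diagonal fun a : Fin n => eigen L a := by
  rw [diagonal_mul_diagonal]
  congr 1
  ext a
  exact div_mul_cancel₀ _ (normSq_pos a.isLt).ne'

lemma matrix_mul_basisMatrix :
    matrix n L * basisMatrix n = basisMatrix n * diagonal fun a : Fin n => eigen L a := by
  rw [matrix, Matrix.mul_assoc, transpose_basisMatrix_mul_basisMatrix, Matrix.mul_assoc,
    diagonal_weight_mul_diagonal_normSq]

lemma charpoly_matrix : (matrix n L).charpoly = ∏ a : Fin n, (X - C (eigen L a)) := by
  rw [matrix, Matrix.mul_assoc, charpoly_mul_comm, Matrix.mul_assoc,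
    transpose_basisMatrix_mul_basisMatrix, diagonal_weight_mul_diagonal_normSq, charpoly_diagonal]

lemma prod_eigen (hn : n ≠ 0) :
    ∏ a : Fin n, (X - C (eigen L a)) = (X - C 1) * ∏ j ∈ Icc 2 n, (X - C (L j)) := by
  obtain ⟨m, rfl⟩ := Nat.exists_eq_add_one_of_ne_zero hn
  rw [Fin.prod_univ_eq_prod_range (fun a => X - C (eigen L a)), prod_range_succ', mul_comm,
    ← Ico_add_one_right_eq_Icc, prod_Ico_eq_prod_range]
  simp [eigen, add_comm 2, add_assoc]

lemma transpose_matrix : (matrix n L)ᵀ = matrix n L := by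
  rw [matrix, transpose_mul, transpose_mul, transpose_transpose, diagonal_transpose,
    Matrix.mul_assoc]

lemma sum_matrix_row (hn : n ≠ 0) (i : Fin n) : ∑ j, matrix n L i j = 1 := by
  have h := congrFun (congrFun (matrix_mul_basisMatrix L) i) ⟨0, Nat.pos_of_ne_zero hn⟩
  rw [mul_diagonal, mul_apply] at h
  simpa [basisMatrix, column_zero, eigen] using h

lemma sum_matrix_column (hn : n ≠ 0) (j : Fin n) : ∑ i, matrix n L i j = 1 := by
  calc ∑ i, matrix n L i j = ∑ i, (matrix n L)ᵀ j i := rfl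
    _ = 1 := by rw [transpose_matrix]; exact sum_matrix_row L hn j

lemma weight_zero : weight n L 0 = 1 / n := by
  simp [weight, eigen, normSq]

lemma weight_sub {j : ℕ} (hjn : j < n) :
    weight n L (n - j) = L (n - j + 1) / (j * (j + 1)) := by
  rw [weight, eigen, normSq, if_neg (by omega), if_neg (by omega), Nat.sub_sub_self hjn.le]

lemma matrix_apply (i j : Fin n) :
    matrix n L i j = ∑ a ∈ range n, weight n L a * column n a i * column n a j := by
  rw [← Fin.sum_univ_eq_sum_range (fun a => weight n L a * column n a i * column n a j), matrix,
    mul_apply]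
  simp only [mul_diagonal, basisMatrix, transpose_apply, of_apply]
  exact sum_congr rfl fun a _ => by ring

lemma matrix_apply_of_lt {i j : Fin n} (hij : i < j) :
    matrix n L i j = tail n L j - L (n - j + 1) / (j + 1) := by
  have hj : (j : ℕ) ≠ 0 := by omega
  rw [matrix_apply, sum_mul_column_over_columns _ hj j.isLt, column_of_lt (by omega), tail,
    sum_congr rfl fun a ha => by rw [column_of_lt (by simp at ha; omega), mul_one],
    weight_sub L j.isLt]
  have : (j : ℝ) ≠ 0 := by exact_mod_cast hj
  field_simp

lemma matrix_apply_self (j : Fin n) :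
    matrix n L j j = tail n L j + j * L (n - j + 1) / (j + 1) := by
  rcases eq_or_ne (j : ℕ) 0 with hj | hj
  · rw [matrix_apply, tail, hj, Nat.sub_zero, Nat.cast_zero, zero_mul, zero_div, add_zero]
    exact sum_congr rfl fun a ha => by rw [column_of_lt (by simp at ha; omega), mul_one, mul_one]
  rw [matrix_apply, sum_mul_column_over_columns _ hj j.isLt, column_of_eq (by omega) (by omega),
    tail, sum_congr rfl fun a ha => by rw [column_of_lt (by simp at ha; omega), mul_one],
    weight_sub L j.isLt, Nat.sub_sub_self j.isLt.le]
  have : (j : ℝ) ≠ 0 := by exact_mod_cast hj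
  field_simp
  ring

lemma tail_succ {j : ℕ} (hj : j + 1 < n) :
    tail n L j = tail n L (j + 1) + L (n - j) / ((j + 1) * (j + 2)) := by
  rw [tail, tail, show n - j = n - (j + 1) + 1 by omega, sum_range_succ,
    weight_sub L hj, show n - (j + 1) + 1 = n - j by omega]
  push_cast
  ring

lemma tail_sub_one : tail n L (n - 1) = 1 / n := by
  rcases eq_or_ne n 0 with rfl | hn
  · simp [tail]
  rw [tail, show n - (n - 1) = 1 by omega, sum_range_one, weight_zero]

lemma tail_two (hn : 3 ≤ n) : tail n L 2 = Squant n L := by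
  rw [tail, Squant, show n - 2 = n - 3 + 1 by omega, sum_range_succ', weight_zero, add_comm,
    ← Ico_add_one_right_eq_Icc, sum_Ico_eq_sum_range, show n - 3 + 1 + 1 - 2 = n - 3 by omega]
  congr 1
  refine sum_congr rfl fun k hk => ?_
  simp only [mem_range] at hk
  rw [weight, eigen, normSq, if_neg k.succ_ne_zero, if_neg k.succ_ne_zero,
    show n - (2 + k) + 2 = n - (k + 1) + 1 by omega, show n - (2 + k) + 1 = n - (k + 1) by omega,
    add_comm 2 k]
  push_cast
  ring

variable {L}

lemma tail_sub_nonneg (hub : L 2 ≤ 1) (hdec : ∀ j, 2 ≤ j → j < n → L (j + 1) ≤ L j)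
    {j : ℕ} (hj : j ≠ 0) (hjn : j < n) : 0 ≤ tail n L j - L (n - j + 1) / (j + 1) := by
  refine Nat.decreasingInduction' (P := fun k => 0 ≤ tail n L k - L (n - k + 1) / (k + 1))
    (fun k hk hjk ih => ?_) (show j ≤ n - 1 by omega) ?_
  · have step : tail n L k - L (n - k + 1) / (k + 1) =
        tail n L (k + 1) - L (n - (k + 1) + 1) / ((k + 1 : ℕ) + 1) +
          (L (n - k) - L (n - k + 1)) / (k + 1) := by
      rw [tail_succ L (by omega), show n - (k + 1) + 1 = n - k by omega]
      push_cast
      field_simp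
      ring
    have hmono : L (n - k + 1) ≤ L (n - k) := hdec (n - k) (by omega) (by omega)
    rw [step]
    exact add_nonneg ih (div_nonneg (sub_nonneg.2 hmono) (by positivity))
  · rw [tail_sub_one, show n - (n - 1) + 1 = 2 by omega, Nat.cast_sub (by omega), Nat.cast_one,
      sub_add_cancel, ← sub_div]
    exact div_nonneg (sub_nonneg.2 hub) (Nat.cast_nonneg n)

lemma tail_zero_nonneg (hn : 3 ≤ n) (hdec : ∀ j, 2 ≤ j → j < n → L (j + 1) ≤ L j)
    (hcond : 0 ≤ Squant n L + 2 * L n / 3) : 0 ≤ tail n L 0 := by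
  have hmono : L n ≤ L (n - 1) := by
    simpa [Nat.sub_add_cancel (by omega : 1 ≤ n)] using hdec (n - 1) (by omega) (by omega)
  rw [tail_succ L (by omega), tail_succ L (by omega), tail_two L hn]
  norm_num
  linarith

lemma tail_add_nonneg (hn : 3 ≤ n) (hdec : ∀ j, 2 ≤ j → j < n → L (j + 1) ≤ L j)
    (hcond : 0 ≤ Squant n L + 2 * L n / 3) {j : ℕ} (hjn : j < n) :
    0 ≤ tail n L j + j * L (n - j + 1) / (j + 1) := by
  induction j with
  | zero => simpa using tail_zero_nonneg hn hdec hcond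
  | succ k ih =>
    have step : tail n L (k + 1) + (k + 1 : ℕ) * L (n - (k + 1) + 1) / ((k + 1 : ℕ) + 1) =
        tail n L k + k * L (n - k + 1) / (k + 1) + k * (L (n - k) - L (n - k + 1)) / (k + 1) := by
      rw [tail_succ L (by omega : k + 1 < n), show n - (k + 1) + 1 = n - k by omega]
      push_cast
      field_simp
      ring
    have hmono : 0 ≤ k * (L (n - k) - L (n - k + 1)) := by
      rcases eq_or_ne k 0 with rfl | hk
      · simp
      · exact mul_nonneg k.cast_nonneg (sub_nonneg.2 (hdec (n - k) (by omega) (by omega)))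
    rw [step]
    exact add_nonneg (ih (by omega)) (div_nonneg hmono (by positivity))

lemma matrix_nonneg (hn : 3 ≤ n) (hub : L 2 ≤ 1) (hdec : ∀ j, 2 ≤ j → j < n → L (j + 1) ≤ L j)
    (hcond : 0 ≤ Squant n L + 2 * L n / 3) (i j : Fin n) : 0 ≤ matrix n L i j := by
  wlog hij : i ≤ j generalizing i j
  · rw [← transpose_matrix L, transpose_apply]
    exact this j i (le_of_not_ge hij)
  rcases hij.lt_or_eq with hij | rfl
  · rw [matrix_apply_of_lt L hij]
    exact tail_sub_nonneg hub hdec (by omega) j.isLt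
  · rw [matrix_apply_self]
    exact tail_add_nonneg hn hdec hcond i.isLt

end Soules

theorem rdiep_W_general (n : ℕ) (hn : 4 ≤ n) (L : ℕ → ℝ) (hub : L 2 ≤ 1)
    (hdec : ∀ j, 2 ≤ j → j < n → L (j + 1) ≤ L j)
    (hcond2 : 0 ≤ Squant n L + 2 * L n / 3) :
    ∃ D : Matrix (Fin n) (Fin n) ℝ, DoublyStochastic D ∧
      D.charpoly = (X - C 1) * ∏ j ∈ Finset.Icc 2 n, (X - C (L j)) := by
  have hn0 : n ≠ 0 := by omega
  refine ⟨Soules.matrix n L, ⟨Soules.matrix_nonneg (by omega) hub hdec hcond2,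
    Soules.sum_matrix_row L hn0, Soules.sum_matrix_column L hn0⟩, ?_⟩
  rw [Soules.charpoly_matrix, Soules.prod_eigen L hn0]

/-- For `n ≥ 4`, `1 ≥ λ₂ ≥ ⋯ ≥ λₙ ≥ -1` with `1 + λ₂ + ⋯ + λₙ ≥ 0`: if both
`S - 2λ_{n-1}/3 + λₙ/3 ≥ 0` and `S + 2λₙ/3 ≥ 0` hold, then `1, λ₂, …, λₙ` is the spectrum
of an `n × n` doubly stochastic matrix. -/
theorem rdiep_W (n : ℕ) (hn : 4 ≤ n) (L : ℕ → ℝ) (hub : L 2 ≤ 1)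
    (hdec : ∀ j, 2 ≤ j → j < n → L (j + 1) ≤ L j)
    (hlb : -1 ≤ L n)
    (htr : 0 ≤ 1 + ∑ j ∈ Finset.Icc 2 n, L j)
    (hcond1 : 0 ≤ Squant n L - 2 * L (n - 1) / 3 + L n / 3)
    (hcond2 : 0 ≤ Squant n L + 2 * L n / 3) :
    ∃ D : Matrix (Fin n) (Fin n) ℝ, DoublyStochastic D ∧
      D.charpoly = (X - C 1) * ∏ j ∈ Finset.Icc 2 n, (X - C (L j)) :=
  rdiep_W_general n hn L hub hdec hcond2
end

section
/- Let n ≥ 5, let 1 ≥ λ₂ ≥ ... ≥ λ_{n−2} ≥ −1 be real numbers, and let a, b be real numbers with a² + b² ≤ 1 and 1 + λ₂ + ... + λ_{n−2} + 2a ≥ 0. Set S = 1/n + Σ_{j=2}^{n−2} λ_j/((n−j+2)(n−j+1)) (so that the coefficient of λ₂ is 1/(n(n−1)) and of λ_{n−2} is 1/12). If the four inequalities S + 2a/3 ≥ 0, S − a/3 − (√3/3)·b ≥ 0, S − a/3 + (√3/3)·b ≥ 0, and 1/n + Σ_{j=2}^{n−3} λ_j/((n−j+2)(n−j+1)) + 3λ_{n−2}/4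 ≥ 0 all hold, then there exists an n×n doubly stochastic matrix whose eigenvalues, counted with algebraic multiplicity, are 1, λ₂, ..., λ_{n−2}, a + ib, a − ib (where i is the imaginary unit). -/
open Matrix Polynomial

/-!
The matrix is `D = J/n + ∑ⱼ λⱼ wⱼwⱼᵀ/‖wⱼ‖² + C`, where the Soules vectors
`wⱼ = (1, …, 1, -(n-j+1), 0, …, 0)` have `n - j + 1` leading ones and `C` is the real `3 × 3`
circulant with eigenvalues `0, a + ib, a - ib`, placed in the top-left corner. Outside that corner
`D p q` depends only on `max p q` and on whether `p = q`: the off-diagonal values are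
nonincreasing in `max p q`, ending at `(1 - λ₂)/n`, and the diagonal ones are nondecreasing,
starting at the left side of the fourth inequality; the other three inequalities say exactly that
the corner is nonnegative. Row sums are `1` by telescoping. The columns
`1, w₂, …, w_{n-2}, (1, ω, ω², 0, …), (1, ω², ω, 0, …)` are pairwise orthogonal eigenvectors of
`D` for `1, λ₂, …, λ_{n-2}, a + ib, a - ib`, so `D` is diagonalizable with that spectrum.
-/

namespace Matrix

variable {ι : Type*} [Fintype ι] [DecidableEq ι]

theorem charpoly_eq_prod_of_mul_eq_mul_diagonal {R : Type*} [CommRing R] {A V : Matrix ι ι R}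
    {μ : ι → R} (hV : IsUnit V.det) (h : A * V = V * diagonal μ) :
    A.charpoly = ∏ i, (X - C (μ i)) := by
  have hA : A = V * diagonal μ * V⁻¹ := by rw [← h, mul_nonsing_inv_cancel_right _ _ hV]
  rw [hA, ← charpoly_diagonal]
  simpa [coe_units_inv] using
    charpoly_units_conj ((isUnit_iff_isUnit_det V).2 hV).unit (diagonal μ)

open scoped ComplexOrder in
theorem isUnit_det_of_pairwise_orthogonal_cols {𝕜 : Type*} [RCLike 𝕜] {V : Matrix ι ι 𝕜}
    (horth : Pairwise fun i j => star (Vᵀ i) ⬝ᵥ Vᵀ j = 0) (hne : ∀ i, Vᵀ i ≠ 0) :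
    IsUnit V.det := by
  have hgram : Vᴴ * V = diagonal fun i => star (Vᵀ i) ⬝ᵥ Vᵀ i := by
    ext i j
    rcases eq_or_ne i j with rfl | hij
    · simp [mul_apply, dotProduct]
    · rw [diagonal_apply_ne _ hij, ← horth hij]
      simp [mul_apply, dotProduct]
  have hdet : star V.det * V.det ≠ 0 := by
    rw [← det_conjTranspose, ← det_mul, hgram, det_diagonal]
    exact Finset.prod_ne_zero_iff.2 fun i _ => dotProduct_star_self_eq_zero.not.2 (hne i)
  exact isUnit_iff_ne_zero.2 (right_ne_zero_of_mul hdet)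

end Matrix

namespace DiepConstruction

-- The paper's `wⱼ` is `soules (n - j + 1)`.
def soules (s p : ℕ) : ℝ := if p < s then 1 else if p = s then -(s : ℝ) else 0

noncomputable def cyc (z : ℂ) (p : ℕ) : ℂ := if p < 3 then z ^ p else 0

lemma sum_range_mul_soules (f : ℕ → ℝ) {s m : ℕ} (hs : s < m) :
    ∑ q ∈ Finset.range m, f q * soules s q = ∑ q ∈ Finset.range s, f q - s * f s := by
  rw [← Finset.sum_subset (Finset.range_subset_range.2 hs) fun q _ hq => by
      have hsq : s < q := by simp only [Finset.mem_range] at hq; omega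
      simp [soules, hsq.not_gt, hsq.ne'],
    Finset.sum_range_succ, Finset.sum_congr rfl fun q hq => by
      rw [soules, if_pos (Finset.mem_range.1 hq), mul_one]]
  simp only [soules, lt_self_iff_false, ↓reduceIte, mul_neg]
  ring

lemma sum_range_soules_mul_soules {s t m : ℕ} (hst : s < t) (hs : s < m) :
    ∑ q ∈ Finset.range m, soules t q * soules s q = 0 := by
  rw [sum_range_mul_soules _ hs, Finset.sum_congr rfl fun q hq => by
    rw [soules, if_pos ((Finset.mem_range.1 hq).trans hst)]]
  simp [soules, hst]

lemma cyc_of_lt (z : ℂ) {p : ℕ} (hp : p < 3) : cyc z p = z ^ p := if_pos hp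

lemma sum_range_mul_cyc (f : ℕ → ℂ) (z : ℂ) {m : ℕ} (hm : 3 ≤ m) :
    ∑ q ∈ Finset.range m, f q * cyc z q = f 0 + f 1 * z + f 2 * z ^ 2 := by
  rw [← Finset.sum_subset (Finset.range_subset_range.2 hm) fun q _ hq => by
      simp [cyc, show ¬ q < 3 from Finset.mem_range.not.1 hq]]
  simp [Finset.sum_range_succ, cyc]

noncomputable def ω : ℂ := (-1 + (√3 : ℂ) * Complex.I) / 2

lemma ofReal_sqrt_three_sq : (√3 : ℂ) ^ 2 = 3 := by
  rw [← Complex.ofReal_pow, Real.sq_sqrt (by norm_num)]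
  norm_num

lemma ω_sq : ω ^ 2 = (-1 - (√3 : ℂ) * Complex.I) / 2 := by
  unfold ω
  linear_combination (Complex.I ^ 2 / 4) * ofReal_sqrt_three_sq + (3 / 4 : ℂ) * Complex.I_sq

lemma one_add_ω_add_ω_sq : 1 + ω + ω ^ 2 = 0 := by
  rw [ω_sq, ω]
  ring

lemma ω_pow_three : ω ^ 3 = 1 := by
  linear_combination (ω - 1) * one_add_ω_add_ω_sq

lemma star_ω : star ω = ω ^ 2 := by
  rw [ω_sq, ω]
  simp only [star_div₀, star_add, star_neg, star_one, star_mul', Complex.star_def,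
    Complex.conj_ofReal, Complex.conj_I, star_ofNat]
  ring

section Entries

variable (n : ℕ) (L : ℕ → ℝ) (a b : ℝ)

-- `Squant n L` is `soulesSum n L 2` by definition.
noncomputable def soulesSum (q : ℕ) : ℝ :=
  1 / (n : ℝ) + ∑ j ∈ Finset.Icc 2 (n - q), L j / (((n - j + 2) * (n - j + 1) : ℕ) : ℝ)

noncomputable def offDiag (q : ℕ) : ℝ := soulesSum n L q - L (n - q + 1) / (q + 1)

noncomputable def diagEntry (q : ℕ) : ℝ := soulesSum n L q + L (n - q + 1) * q / (q + 1)

-- The first row of the real circulant with eigenvalues `0, a + ib, a - ib`.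
noncomputable def circ (r : ℕ) : ℝ :=
  if r = 0 then 2 * a / 3
  else if r = 1 then -(a / 3) + √3 / 3 * b
  else -(a / 3) - √3 / 3 * b

noncomputable def circSymbol (z : ℂ) : ℂ := circ a b 0 + circ a b 1 * z + circ a b 2 * z ^ 2

noncomputable def entry (p q : ℕ) : ℝ :=
  if p ≤ 2 ∧ q ≤ 2 then soulesSum n L 2 + circ a b ((q + 3 - p) % 3)
  else if p = q then diagEntry n L p else offDiag n L (max p q)

variable {n}

lemma soulesSum_eq_add {q : ℕ} (hq : q + 2 ≤ n) :
    soulesSum n L q = soulesSum n L (q + 1) + L (n - q) / (((q + 2) * (q + 1) : ℕ) : ℝ) := by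
  have hnq : n - q = n - (q + 1) + 1 := by omega
  rw [soulesSum, soulesSum, hnq, Finset.sum_Icc_succ_top (by omega), ← hnq,
    show n - (n - q) = q by omega]
  ring

lemma soulesSum_sub_one (hn : 1 ≤ n) : soulesSum n L (n - 1) = 1 / n := by
  simp [soulesSum, show n - (n - 1) = 1 by omega]

lemma diagEntry_eq_offDiag_add (q : ℕ) : diagEntry n L q = offDiag n L q + L (n - q + 1) := by
  rw [diagEntry, offDiag]
  field_simp
  ring

lemma offDiag_succ {q : ℕ} (hq : q + 2 ≤ n) :
    offDiag n L (q + 1) = (q + 2) * soulesSum n L (q + 1) - (q + 1) * soulesSum n L q := by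
  rw [offDiag, soulesSum_eq_add L hq, show n - (q + 1) + 1 = n - q by omega]
  push_cast
  field_simp
  ring

lemma offDiag_sub_offDiag_succ {q : ℕ} (hq : q + 2 ≤ n) :
    offDiag n L q - offDiag n L (q + 1) = (L (n - q) - L (n - q + 1)) / (q + 1) := by
  rw [offDiag, offDiag, soulesSum_eq_add L hq, show n - (q + 1) + 1 = n - q by omega]
  push_cast
  field_simp
  ring

lemma diagEntry_succ_sub_diagEntry {q : ℕ} (hq : q + 2 ≤ n) :
    diagEntry n L (q + 1) - diagEntry n L q = q / (q + 1) * (L (n - q) - L (n - q + 1)) := by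
  rw [diagEntry, diagEntry, soulesSum_eq_add L hq, show n - (q + 1) + 1 = n - q by omega]
  push_cast
  field_simp
  ring

lemma offDiag_nonneg (hub : L 2 ≤ 1) (hdec : ∀ j, 2 ≤ j → j < n - 2 → L (j + 1) ≤ L j)
    {q : ℕ} (hq : 3 ≤ q) (hqn : q ≤ n - 1) : 0 ≤ offDiag n L q := by
  refine Nat.decreasingInduction' (fun k hk hqk ih => ?_) hqn ?_
  · have hmono : L (n - k + 1) ≤ L (n - k) := hdec (n - k) (by omega) (by omega)
    have : 0 ≤ (L (n - k) - L (n - k + 1)) / (k + 1) := div_nonneg (by linarith) (by positivity)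
    linarith [offDiag_sub_offDiag_succ L (by omega : k + 2 ≤ n)]
  · have hn : (((n - 1 : ℕ) : ℝ) + 1) = n := by
      rw [← Nat.cast_add_one, Nat.sub_add_cancel (by omega)]
    rw [offDiag, soulesSum_sub_one L (by omega), show n - (n - 1) + 1 = 2 by omega, hn,
      div_sub_div_same]
    exact div_nonneg (by linarith) (Nat.cast_nonneg n)

lemma diagEntry_nonneg (hdec : ∀ j, 2 ≤ j → j < n - 2 → L (j + 1) ≤ L j)
    (h3 : 0 ≤ diagEntry n L 3) {q : ℕ} (hq : 3 ≤ q) (hqn : q ≤ n - 1) : 0 ≤ diagEntry n L q := by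
  induction q, hq using Nat.le_induction with
  | base => exact h3
  | succ k hk ih =>
    have hmono : L (n - k + 1) ≤ L (n - k) := hdec (n - k) (by omega) (by omega)
    have : 0 ≤ k / (k + 1) * (L (n - k) - L (n - k + 1)) :=
      mul_nonneg (by positivity) (by linarith)
    linarith [ih (by omega), diagEntry_succ_sub_diagEntry L (by omega : k + 2 ≤ n)]

lemma diagEntry_three (hn : 3 ≤ n) :
    diagEntry n L 3 = 1 / (n : ℝ) +
      (∑ j ∈ Finset.Icc 2 (n - 3), L j / (((n - j + 2) * (n - j + 1) : ℕ) : ℝ)) +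
      3 * L (n - 2) / 4 := by
  rw [diagEntry, soulesSum, show n - 3 + 1 = n - 2 by omega]
  push_cast
  ring

variable {L a b}

lemma entry_of_lt {p q : ℕ} (hpq : p < q) (hq : 3 ≤ q) : entry n L a b p q = offDiag n L q := by
  rw [entry, if_neg (by omega), if_neg hpq.ne, max_eq_right hpq.le]

lemma entry_of_gt {p q : ℕ} (hqp : q < p) (hp : 3 ≤ p) : entry n L a b p q = offDiag n L p := by
  rw [entry, if_neg (by omega), if_neg hqp.ne', max_eq_left hqp.le]

lemma entry_self {p : ℕ} (hp : 3 ≤ p) : entry n L a b p p = diagEntry n L p := by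
  rw [entry, if_neg (by omega), if_pos rfl]

lemma entry_comm {p q : ℕ} (h : 3 ≤ p ∨ 3 ≤ q) : entry n L a b p q = entry n L a b q p := by
  rcases eq_or_ne p q with rfl | hpq
  · rfl
  · unfold entry
    rw [if_neg (show ¬(p ≤ 2 ∧ q ≤ 2) by omega), if_neg (show ¬(q ≤ 2 ∧ p ≤ 2) by omega),
      if_neg hpq, if_neg hpq.symm, max_comm]

lemma entry_nonneg (hub : L 2 ≤ 1) (hdec : ∀ j, 2 ≤ j → j < n - 2 → L (j + 1) ≤ L j)
    (hcirc : ∀ r, 0 ≤ soulesSum n L 2 + circ a b r) (h3 : 0 ≤ diagEntry n L 3)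
    {p q : ℕ} (hp : p < n) (hq : q < n) : 0 ≤ entry n L a b p q := by
  unfold entry
  split_ifs with hblock hpq
  · exact hcirc _
  · exact diagEntry_nonneg L hdec h3 (by omega) (by omega)
  · exact offDiag_nonneg L hub hdec (by omega) (by omega)

lemma sum_range_three_entry {p : ℕ} (hp : p ≤ 2) :
    ∑ q ∈ Finset.range 3, entry n L a b p q = 3 * soulesSum n L 2 := by
  interval_cases p <;>
    simp only [entry, circ, Finset.sum_range_succ, Finset.sum_range_zero, le_refl,
      Nat.zero_le, Nat.one_le_ofNat, and_self, ↓reduceIte, Nat.reduceAdd, Nat.reduceSub,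
      Nat.reduceMod, zero_add, one_ne_zero, OfNat.ofNat_ne_zero, OfNat.ofNat_ne_one] <;> ring

lemma sum_range_three_entry_left {q : ℕ} (hq : q ≤ 2) :
    ∑ p ∈ Finset.range 3, entry n L a b p q = 3 * soulesSum n L 2 := by
  interval_cases q <;>
    simp only [entry, circ, Finset.sum_range_succ, Finset.sum_range_zero, le_refl,
      Nat.zero_le, Nat.one_le_ofNat, and_self, ↓reduceIte, Nat.reduceAdd, Nat.reduceSub,
      Nat.reduceMod, zero_add, one_ne_zero, OfNat.ofNat_ne_zero, OfNat.ofNat_ne_one] <;> ring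

lemma sum_range_entry_of_le {p s : ℕ} (hsp : s ≤ p) (hp : 3 ≤ p) :
    ∑ q ∈ Finset.range s, entry n L a b p q = s * offDiag n L p := by
  rw [Finset.sum_congr rfl fun q hq => entry_of_gt ((Finset.mem_range.1 hq).trans_le hsp) hp]
  simp

lemma sum_range_succ_entry {p s : ℕ} (hps : p ≤ s) (hs : 2 ≤ s) (hsn : s + 1 ≤ n) :
    ∑ q ∈ Finset.range (s + 1), entry n L a b p q = (s + 1) * soulesSum n L s := by
  induction s, hs using Nat.le_induction generalizing p with
  | base =>
    rw [sum_range_three_entry hps]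
    norm_num
  | succ s hs ih =>
    rw [Finset.sum_range_succ]
    rcases hps.lt_or_eq with hps | rfl
    · rw [ih (by omega) (by omega), entry_of_lt (by omega) (by omega),
        offDiag_succ L (by omega : s + 2 ≤ n)]
      push_cast
      ring
    · rw [sum_range_entry_of_le le_rfl (by omega), entry_self (by omega),
        diagEntry_eq_offDiag_add, offDiag]
      push_cast
      field_simp
      ring

lemma sum_range_entry (hn : 3 ≤ n) {p : ℕ} (hp : p < n) :
    ∑ q ∈ Finset.range n, entry n L a b p q = 1 := by
  have hsum := sum_range_succ_entry (n := n) (L := L) (a := a) (b := b) (p := p) (s := n - 1)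
    (by omega) (by omega) (by omega)
  rw [Nat.sub_add_cancel (by omega), soulesSum_sub_one L (by omega)] at hsum
  rw [hsum, Nat.cast_sub (by omega)]
  field_simp
  ring

lemma sum_range_entry_left (hn : 3 ≤ n) {q : ℕ} (hq : q < n) :
    ∑ p ∈ Finset.range n, entry n L a b p q = 1 := by
  rw [← sum_range_entry hn hq, Finset.range_eq_Ico,
    ← Finset.sum_Ico_consecutive _ (Nat.zero_le 3) hn,
    ← Finset.sum_Ico_consecutive (fun p => entry n L a b q p) (Nat.zero_le 3) hn,
    Finset.sum_congr rfl fun p hp => entry_comm (Or.inl (Finset.mem_Ico.1 hp).1)]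
  congr 1
  rcases le_or_gt q 2 with hq2 | hq2
  · rw [← Finset.range_eq_Ico, sum_range_three_entry hq2, sum_range_three_entry_left hq2]
  · exact Finset.sum_congr rfl fun p _ => entry_comm (Or.inr hq2)

lemma sum_range_entry_mul_soules {s p : ℕ} (hs : 3 ≤ s) (hsn : s < n) (hp : p < n) :
    ∑ q ∈ Finset.range n, entry n L a b p q * soules s q = L (n - s + 1) * soules s p := by
  rw [sum_range_mul_soules _ hsn]
  obtain ⟨t, rfl⟩ : ∃ t, s = t + 1 := ⟨s - 1, by omega⟩
  rcases lt_trichotomy p (t + 1) with hps | rfl | hps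
  · rw [sum_range_succ_entry (by omega) (by omega) (by omega), entry_of_lt hps hs, offDiag,
      soulesSum_eq_add L (by omega : t + 2 ≤ n), show n - (t + 1) + 1 = n - t by omega]
    simp only [soules, if_pos hps]
    push_cast
    field_simp
    ring
  · rw [sum_range_entry_of_le le_rfl hs, entry_self hs, diagEntry_eq_offDiag_add]
    simp only [soules, lt_irrefl, if_false, if_true]
    push_cast
    ring
  · rw [sum_range_entry_of_le hps.le (by omega), entry_of_gt hps (by omega)]
    simp [soules, hps.not_gt, hps.ne']

lemma sum_range_entry_mul_cyc (hn : 3 ≤ n) {z : ℂ} (hz : 1 + z + z ^ 2 = 0) (hz3 : z ^ 3 = 1)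
    {p : ℕ} (hp : p < n) :
    ∑ q ∈ Finset.range n, (entry n L a b p q : ℂ) * cyc z q =
      circSymbol a b z * cyc z p := by
  rw [sum_range_mul_cyc _ z hn, circSymbol]
  rcases le_or_gt p 2 with hp2 | hp2
  · interval_cases p <;>
      simp only [entry, cyc, le_refl, Nat.zero_le, Nat.one_le_ofNat, and_self, ↓reduceIte,
        Nat.reduceAdd, Nat.reduceSub, Nat.reduceMod, zero_add, Nat.ofNat_pos, Nat.one_lt_ofNat,
        Nat.lt_add_one, pow_zero, pow_one, mul_one, Complex.ofReal_add]
    · linear_combination (soulesSum n L 2 : ℂ) * hz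
    · linear_combination (soulesSum n L 2 : ℂ) * hz - (circ a b 2 : ℂ) * hz3
    · linear_combination (soulesSum n L 2 : ℂ) * hz - (circ a b 1 + circ a b 2 * z : ℂ) * hz3
  · rw [entry_of_gt (by omega) hp2, entry_of_gt (by omega) hp2, entry_of_gt (by omega) hp2]
    rw [cyc, if_neg (by omega)]
    linear_combination (offDiag n L p : ℂ) * hz

end Entries

lemma circSymbol_ω (a b : ℝ) : circSymbol a b ω = a + b * Complex.I := by
  rw [circSymbol, ω_sq, ω]
  simp only [circ, ↓reduceIte, one_ne_zero, OfNat.ofNat_ne_zero, OfNat.ofNat_ne_one]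
  push_cast
  linear_combination (b / 3 * Complex.I) * ofReal_sqrt_three_sq

lemma circSymbol_ω_sq (a b : ℝ) : circSymbol a b (ω ^ 2) = a - b * Complex.I := by
  rw [circSymbol, show (ω ^ 2) ^ 2 = ω by linear_combination ω * ω_pow_three, ω_sq, ω]
  simp only [circ, ↓reduceIte, one_ne_zero, OfNat.ofNat_ne_zero, OfNat.ofNat_ne_one]
  push_cast
  linear_combination (-b / 3 * Complex.I) * ofReal_sqrt_three_sq

section Basis

variable (n : ℕ) (L : ℕ → ℝ) (a b : ℝ)

noncomputable def eigvec (i p : ℕ) : ℂ :=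
  if i ≤ n - 3 then soules (n - i) p else if i = n - 2 then cyc ω p else cyc (ω ^ 2) p

noncomputable def eigval (i : ℕ) : ℂ :=
  if i = 0 then 1 else if i ≤ n - 3 then L (i + 1)
  else if i = n - 2 then a + b * Complex.I else a - b * Complex.I

noncomputable def entryMatrix : Matrix (Fin n) (Fin n) ℝ := of fun p q => entry n L a b p q

noncomputable def eigvecMatrix : Matrix (Fin n) (Fin n) ℂ := of fun p i => eigvec n i p

variable {n L a b}

lemma sum_range_entry_mul_eigvec (hn : 3 ≤ n) {p i : ℕ} (hp : p < n) (hi : i < n) :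
    ∑ q ∈ Finset.range n, (entry n L a b p q : ℂ) * eigvec n i q =
      eigval n L a b i * eigvec n i p := by
  rcases (by omega : i = 0 ∨ (1 ≤ i ∧ i ≤ n - 3) ∨ i = n - 2 ∨ i = n - 1) with
    rfl | ⟨hi1, hi3⟩ | rfl | rfl
  · have hones : ∀ q < n, eigvec n 0 q = 1 := fun q hq => by simp [eigvec, soules, hq]
    rw [Finset.sum_congr rfl fun q hq => by rw [hones q (Finset.mem_range.1 hq)], hones p hp]
    simp only [mul_one, eigval, ↓reduceIte]
    exact_mod_cast congrArg Complex.ofReal (sum_range_entry (L := L) (a := a) (b := b) hn hp)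
  · have hreal := sum_range_entry_mul_soules (L := L) (a := a) (b := b) (s := n - i)
      (by omega) (by omega) hp
    rw [show n - (n - i) + 1 = i + 1 by omega] at hreal
    simp only [eigvec, eigval, if_pos hi3, if_neg (show i ≠ 0 by omega)]
    exact_mod_cast congrArg Complex.ofReal hreal
  · simp only [eigvec, eigval, if_neg (show ¬ n - 2 ≤ n - 3 by omega),
      if_neg (show n - 2 ≠ 0 by omega), ↓reduceIte]
    rw [sum_range_entry_mul_cyc hn one_add_ω_add_ω_sq ω_pow_three hp, circSymbol_ω]
  · simp only [eigvec, eigval, if_neg (show ¬ n - 1 ≤ n - 3 by omega),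
      if_neg (show n - 1 ≠ 0 by omega), if_neg (show n - 1 ≠ n - 2 by omega)]
    rw [sum_range_entry_mul_cyc hn (by linear_combination one_add_ω_add_ω_sq + ω * ω_pow_three)
      (by linear_combination (ω ^ 3 + 1) * ω_pow_three) hp, circSymbol_ω_sq]

lemma eigvec_of_le {i : ℕ} (hi : i ≤ n - 3) (p : ℕ) : eigvec n i p = soules (n - i) p := by
  simp [eigvec, hi]

lemma eigvec_sub_two (hn : 3 ≤ n) : eigvec n (n - 2) = cyc ω := by
  ext p
  simp [eigvec, show ¬ n - 2 ≤ n - 3 by omega]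

lemma eigvec_sub_one (hn : 3 ≤ n) : eigvec n (n - 1) = cyc (ω ^ 2) := by
  ext p
  simp [eigvec, show ¬ n - 1 ≤ n - 3 by omega, show n - 1 ≠ n - 2 by omega]

lemma eigvec_apply_zero (hn : 3 ≤ n) (i : ℕ) : eigvec n i 0 = 1 := by
  unfold eigvec
  split_ifs with hi
  · simp only [soules, Complex.ofReal_eq_one, if_pos (show 0 < n - i by omega)]
  all_goals simp only [cyc, Nat.ofNat_pos, ↓reduceIte, pow_zero]

lemma sum_range_star_eigvec_mul_eigvec (hn : 3 ≤ n) {i j : ℕ} (hi : i < n) (hj : j < n)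
    (hij : i ≠ j) : ∑ p ∈ Finset.range n, star (eigvec n i p) * eigvec n j p = 0 := by
  wlog hcase : i ≤ n - 3 ∨ n - 3 < j generalizing i j
  · rw [← star_eq_zero, star_sum, ← this hj hi hij.symm (by omega)]
    simp [mul_comm]
  rcases (by omega : (i ≤ n - 3 ∧ j ≤ n - 3) ∨ n - 3 < j) with ⟨hi3, hj3⟩ | hj3
  · simp only [eigvec_of_le hi3, eigvec_of_le hj3, Complex.star_def, Complex.conj_ofReal]
    rcases lt_or_gt_of_ne (show n - i ≠ n - j by omega) with h | h
    · simp_rw [mul_comm (soules (n - i) _ : ℂ)]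
      exact_mod_cast congrArg Complex.ofReal (sum_range_soules_mul_soules h (by omega))
    · exact_mod_cast congrArg Complex.ofReal (sum_range_soules_mul_soules h (by omega))
  have hω4 : (ω ^ 2) ^ 2 = ω := by linear_combination ω * ω_pow_three
  have hstar2 : star (ω ^ 2) = ω := by rw [star_pow, star_ω, hω4]
  have hcyc : ∀ p, p < 3 → star (eigvec n i p) =
      (if i ≤ n - 3 then 1 else if i = n - 2 then ω ^ 2 else ω) ^ p := by
    intro p hp
    rcases (by omega : i ≤ n - 3 ∨ i = n - 2 ∨ i = n - 1) with hi3 | rfl | rfl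
    · simp [eigvec_of_le hi3, soules, hi3, show p < n - i by omega]
    · simp [eigvec_sub_two hn, star_ω, cyc_of_lt _ hp, show ¬ n - 2 ≤ n - 3 by omega]
    · simp [eigvec_sub_one hn, hstar2, cyc_of_lt _ hp, show ¬ n - 1 ≤ n - 3 by omega,
        show n - 1 ≠ n - 2 by omega]
  rcases (by omega : j = n - 2 ∨ j = n - 1) with rfl | rfl
  · rw [eigvec_sub_two hn, sum_range_mul_cyc _ _ hn, hcyc 0 (by norm_num), hcyc 1 (by norm_num),
      hcyc 2 (by norm_num)]
    rcases (by omega : i ≤ n - 3 ∨ i = n - 1) with hi3 | rfl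
    · simp only [if_pos hi3]
      linear_combination one_add_ω_add_ω_sq
    · simp only [if_neg (show ¬ n - 1 ≤ n - 3 by omega), if_neg (show n - 1 ≠ n - 2 by omega)]
      linear_combination one_add_ω_add_ω_sq + ω * ω_pow_three
  · rw [eigvec_sub_one hn, sum_range_mul_cyc _ _ hn, hcyc 0 (by norm_num), hcyc 1 (by norm_num),
      hcyc 2 (by norm_num)]
    rcases (by omega : i ≤ n - 3 ∨ i = n - 2) with hi3 | rfl
    · simp only [if_pos hi3]
      linear_combination one_add_ω_add_ω_sq + ω * ω_pow_three
    · simp only [if_neg (show ¬ n - 2 ≤ n - 3 by omega), ↓reduceIte]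
      linear_combination one_add_ω_add_ω_sq + (ω + ω ^ 2 * (ω ^ 3 + 1)) * ω_pow_three

lemma prod_range_eigval (hn : 3 ≤ n) :
    ∏ i ∈ Finset.range n, (X - C (eigval n L a b i)) =
      (X - C 1) * (∏ j ∈ Finset.Icc 2 (n - 2), (X - C ((L j : ℂ)))) *
        (X - C ((a : ℂ) + (b : ℂ) * Complex.I)) * (X - C ((a : ℂ) - (b : ℂ) * Complex.I)) := by
  obtain ⟨m, rfl⟩ : ∃ m, n = m + 3 := ⟨n - 3, by omega⟩
  have hIcc : Finset.Icc 2 (m + 3 - 2) = Finset.Ico 2 (m + 2) := by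
    ext; simp only [Finset.mem_Icc, Finset.mem_Ico]; omega
  rw [Finset.prod_range_succ, Finset.prod_range_succ, Finset.prod_range_succ', hIcc,
    Finset.prod_Ico_eq_prod_range, show m + 2 - 2 = m by omega]
  have hmid : ∀ k ∈ Finset.range m, eigval (m + 3) L a b (k + 1) = L (2 + k) := fun k hk => by
    simp [eigval, Nat.succ_le_of_lt (Finset.mem_range.1 hk), add_comm 2 k]
  rw [Finset.prod_congr rfl fun k hk => by rw [hmid k hk]]
  simp only [eigval, show m + 3 - 3 = m by omega, show m + 3 - 2 = m + 1 by omega,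
    ↓reduceIte, if_neg (show m + 1 ≠ 0 by omega), if_neg (show ¬ m + 1 ≤ m by omega),
    if_neg (show m + 2 ≠ 0 by omega), if_neg (show ¬ m + 2 ≤ m by omega),
    if_neg (show m + 2 ≠ m + 1 by omega)]
  ring

lemma doublyStochastic_entryMatrix (hn : 3 ≤ n) (hub : L 2 ≤ 1)
    (hdec : ∀ j, 2 ≤ j → j < n - 2 → L (j + 1) ≤ L j)
    (hcirc : ∀ r, 0 ≤ soulesSum n L 2 + circ a b r) (h3 : 0 ≤ diagEntry n L 3) :
    DoublyStochastic (entryMatrix n L a b) := by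
  refine ⟨fun p q => entry_nonneg hub hdec hcirc h3 p.2 q.2, fun p => ?_, fun q => ?_⟩
  · simpa [entryMatrix, Fin.sum_univ_eq_sum_range (entry n L a b p)] using sum_range_entry hn p.2
  · simpa [entryMatrix, Fin.sum_univ_eq_sum_range (entry n L a b · q)]
      using sum_range_entry_left hn q.2

lemma isUnit_det_eigvecMatrix (hn : 3 ≤ n) : IsUnit (eigvecMatrix n).det := by
  refine isUnit_det_of_pairwise_orthogonal_cols (fun i j hij => ?_) fun i hi => ?_
  · simp only [dotProduct, transpose_apply, eigvecMatrix, of_apply, Pi.star_apply]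
    rw [Fin.sum_univ_eq_sum_range (fun p => star (eigvec n i p) * eigvec n j p)]
    exact sum_range_star_eigvec_mul_eigvec hn i.2 j.2 (Fin.val_ne_of_ne hij)
  · simpa [eigvecMatrix, eigvec_apply_zero hn] using congrFun hi ⟨0, by omega⟩

lemma entryMatrix_mul_eigvecMatrix (hn : 3 ≤ n) :
    (entryMatrix n L a b).map (algebraMap ℝ ℂ) * eigvecMatrix n =
      eigvecMatrix n * diagonal fun i : Fin n => eigval n L a b i := by
  ext p i
  rw [mul_diagonal, mul_apply]
  simp only [map_apply, entryMatrix, eigvecMatrix, of_apply, Complex.coe_algebraMap]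
  rw [Fin.sum_univ_eq_sum_range (fun q => (entry n L a b p q : ℂ) * eigvec n i q), mul_comm]
  exact sum_range_entry_mul_eigvec hn p.2 i.2

end Basis

end DiepConstruction

open DiepConstruction in
theorem diep_complex_general (n : ℕ) (hn : 5 ≤ n) (L : ℕ → ℝ) (a b : ℝ)
    (hub : L 2 ≤ 1)
    (hdec : ∀ j, 2 ≤ j → j < n - 2 → L (j + 1) ≤ L j)
    (hc1 : 0 ≤ Squant n L + 2 * a / 3)
    (hc2 : 0 ≤ Squant n L - a / 3 - Real.sqrt 3 / 3 * b)
    (hc3 : 0 ≤ Squant n L - a / 3 + Real.sqrt 3 / 3 * b)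
    (hc4 : 0 ≤ 1 / (n : ℝ) +
        (∑ j ∈ Finset.Icc 2 (n - 3), L j / (((n - j + 2) * (n - j + 1) : ℕ) : ℝ)) +
        3 * L (n - 2) / 4) :
    ∃ D : Matrix (Fin n) (Fin n) ℝ, DoublyStochastic D ∧
      D.charpoly.map (algebraMap ℝ ℂ) =
        (X - C 1) * (∏ j ∈ Finset.Icc 2 (n - 2), (X - C ((L j : ℂ)))) *
          (X - C ((a : ℂ) + (b : ℂ) * Complex.I)) *
          (X - C ((a : ℂ) - (b : ℂ) * Complex.I)) := by
  have hn3 : 3 ≤ n := by omega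
  have hcirc : ∀ r, 0 ≤ soulesSum n L 2 + circ a b r := fun r => by
    change 0 ≤ Squant n L + circ a b r
    unfold circ
    split_ifs <;> linarith
  have hdiag : 0 ≤ diagEntry n L 3 := by rwa [diagEntry_three L hn3]
  refine ⟨entryMatrix n L a b, doublyStochastic_entryMatrix hn3 hub hdec hcirc hdiag, ?_⟩
  rw [← charpoly_map, charpoly_eq_prod_of_mul_eq_mul_diagonal (isUnit_det_eigvecMatrix hn3)
      (entryMatrix_mul_eigvecMatrix hn3),
    Fin.prod_univ_eq_prod_range (fun i => X - C (eigval n L a b i)), prod_range_eigval hn3]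

/-- For `n ≥ 5`, real `1 ≥ λ₂ ≥ ⋯ ≥ λ_{n-2} ≥ -1` and `a, b` with `a² + b² ≤ 1` and
`1 + λ₂ + ⋯ + λ_{n-2} + 2a ≥ 0`: if `S + 2a/3 ≥ 0`, `S - a/3 - (√3/3)b ≥ 0`,
`S - a/3 + (√3/3)b ≥ 0`, and `1/n + ∑_{j=2}^{n-3} λⱼ/((n-j+2)(n-j+1)) + 3λ_{n-2}/4 ≥ 0`,
then `1, λ₂, …, λ_{n-2}, a + ib, a - ib` is the spectrum of an `n × n` doubly stochastic
matrix. -/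
theorem diep_complex (n : ℕ) (hn : 5 ≤ n) (L : ℕ → ℝ) (a b : ℝ)
    (hub : L 2 ≤ 1)
    (hdec : ∀ j, 2 ≤ j → j < n - 2 → L (j + 1) ≤ L j)
    (hlb : -1 ≤ L (n - 2))
    (hab : a ^ 2 + b ^ 2 ≤ 1)
    (htr : 0 ≤ 1 + (∑ j ∈ Finset.Icc 2 (n - 2), L j) + 2 * a)
    (hc1 : 0 ≤ Squant n L + 2 * a / 3)
    (hc2 : 0 ≤ Squant n L - a / 3 - Real.sqrt 3 / 3 * b)
    (hc3 : 0 ≤ Squant n L - a / 3 + Real.sqrt 3 / 3 * b)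
    (hc4 : 0 ≤ 1 / (n : ℝ) +
        (∑ j ∈ Finset.Icc 2 (n - 3), L j / (((n - j + 2) * (n - j + 1) : ℕ) : ℝ)) +
        3 * L (n - 2) / 4) :
    ∃ D : Matrix (Fin n) (Fin n) ℝ, DoublyStochastic D ∧
      D.charpoly.map (algebraMap ℝ ℂ) =
        (X - C 1) * (∏ j ∈ Finset.Icc 2 (n - 2), (X - C ((L j : ℂ)))) *
          (X - C ((a : ℂ) + (b : ℂ) * Complex.I)) *
          (X - C ((a : ℂ) - (b : ℂ) * Complex.I)) :=
  diep_complex_general n hn L a b hub hdec hc1 hc2 hc3 hc4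
end
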